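/- Let n, k be integers with k ≥ 1, and let γ be a real number with 0 < γ and k < n/2 − γ; set a₀ = (n−k−2)/2. Then for every real a ≥ a₀, the function b ↦ Θʳ(γ,a,b) tends to +∞ as b → +∞. -/

import Mathlib

/-!
Write `s = (1 - γ + a)/2 + (b/2) i`, so that `Θʳ(γ, a, b) = 4^γ ‖Γ(s + γ) / Γ(s)‖²`. The hypotheses
force `Re s > 0`, and then Euler's identity `Γ(s) Γ(γ) = Γ(s + γ) B(s, γ)` turns the ratio into
`Γ(γ) / B(s, γ)`. The Beta integral is a Mellin transform, hence a Fourier transform after the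
substitution `t = e^{-u}`, so by Riemann–Lebesgue it tends to `0` as `Im s → ∞`.
-/

open Complex Filter Set MeasureTheory Topology

/-- The Fourier symbol at a real argument `b`. -/
noncomputable def ThetaR (γ a b : ℝ) : ℝ :=
  (4 : ℝ) ^ γ * ‖Complex.Gamma (((1 + γ + a) / 2 : ℝ) + (b / 2 : ℝ) * Complex.I)‖ ^ 2 /
    ‖Complex.Gamma (((1 - γ + a) / 2 : ℝ) + (b / 2 : ℝ) * Complex.I)‖ ^ 2

/-- Where `f` is not Mellin convergent, `mellin f` is the junk value `0`. -/
theorem tendsto_mellin_vertical_cocompact {E : Type*} [NormedAddCommGroup E] [NormedSpace ℂ E]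
    (f : ℝ → E) (σ : ℝ) :
    Tendsto (fun t : ℝ => mellin f (σ + t * I)) (cocompact ℝ) (𝓝 0) := by
  have h2π : (2 * Real.pi)⁻¹ ≠ 0 := by positivity
  simp only [mellin_eq_fourier, add_re, ofReal_re, mul_re, I_re, mul_zero, ofReal_im, I_im,
    mul_one, sub_self, add_zero, add_im, mul_im, zero_add, div_eq_mul_inv]
  exact (Real.zero_at_infty_fourier _).comp (tendsto_cocompact_mul_right₀ h2π)

theorem betaIntegral_eq_mellin (u v : ℂ) :
    betaIntegral u v = mellin ((Iic 1).indicator fun t : ℝ => (1 - (t : ℂ)) ^ (v - 1)) u := by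
  rw [betaIntegral, intervalIntegral.integral_of_le zero_le_one, mellin]
  simp only [smul_eq_mul, ← indicator_mul_right (Iic 1) fun t : ℝ => (t : ℂ) ^ (u - 1)]
  rw [setIntegral_indicator measurableSet_Iic, Ioi_inter_Iic]

theorem tendsto_betaIntegral_vertical_cocompact (σ : ℝ) (v : ℂ) :
    Tendsto (fun t : ℝ => betaIntegral (σ + t * I) v) (cocompact ℝ) (𝓝 0) := by
  simpa only [betaIntegral_eq_mellin] using tendsto_mellin_vertical_cocompact _ σ

theorem betaIntegral_ne_zero {s v : ℂ} (hs : 0 < s.re) (hv : 0 < v.re) :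
    betaIntegral s v ≠ 0 := by
  intro hB
  have hEuler := Gamma_mul_Gamma_eq_betaIntegral hs hv
  rw [hB, mul_zero] at hEuler
  exact mul_ne_zero (Gamma_ne_zero_of_re_pos hs) (Gamma_ne_zero_of_re_pos hv) hEuler

theorem Gamma_add_div_Gamma_eq_div_betaIntegral {s v : ℂ} (hs : 0 < s.re) (hv : 0 < v.re) :
    Gamma (s + v) / Gamma s = Gamma v / betaIntegral s v := by
  rw [div_eq_div_iff (Gamma_ne_zero_of_re_pos hs) (betaIntegral_ne_zero hs hv),
    ← Gamma_mul_Gamma_eq_betaIntegral hs hv, mul_comm]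

theorem tendsto_norm_Gamma_add_div_Gamma_vertical {σ : ℝ} (hσ : 0 < σ) {v : ℂ} (hv : 0 < v.re) :
    Tendsto (fun t : ℝ => ‖Gamma (σ + t * I + v) / Gamma (σ + t * I)‖) (cocompact ℝ) atTop := by
  have hre : ∀ t : ℝ, 0 < (σ + t * I : ℂ).re := by simpa using hσ
  simp_rw [Gamma_add_div_Gamma_eq_div_betaIntegral (hre _) hv, norm_div, div_eq_mul_inv]
  refine Tendsto.const_mul_atTop (norm_pos_iff.mpr (Gamma_ne_zero_of_re_pos hv)) ?_
  refine Tendsto.inv_tendsto_nhdsGT_zero (tendsto_nhdsWithin_iff.mpr ⟨?_, ?_⟩)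
  · simpa using (tendsto_betaIntegral_vertical_cocompact σ v).norm
  · exact Eventually.of_forall fun t => norm_pos_iff.mpr (betaIntegral_ne_zero (hre t) hv)

theorem ThetaR_eq_mul_norm_Gamma_ratio_sq (γ a b : ℝ) :
    ThetaR γ a b = 4 ^ γ * ‖Gamma (((1 - γ + a) / 2 : ℝ) + (b / 2 : ℝ) * I + γ) /
      Gamma (((1 - γ + a) / 2 : ℝ) + (b / 2 : ℝ) * I)‖ ^ 2 := by
  rw [ThetaR, norm_div, div_pow, mul_div_assoc]
  congr 5
  push_cast
  ring

theorem stmt9 (n k : ℤ) (hk : 1 ≤ k) (γ : ℝ) (hγ : 0 < γ)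
    (hkn : (k : ℝ) < (n : ℝ) / 2 - γ) :
    ∀ a : ℝ, ((n : ℝ) - (k : ℝ) - 2) / 2 ≤ a →
      Filter.Tendsto (fun b : ℝ => ThetaR γ a b) Filter.atTop Filter.atTop := by
  intro a ha
  have hk' : (1 : ℝ) ≤ k := by exact_mod_cast hk
  have hσ : 0 < (1 - γ + a) / 2 := by linarith
  have hhalf : Tendsto (fun b : ℝ => b / 2) atTop (cocompact ℝ) :=
    (tendsto_id.atTop_div_const two_pos).mono_right atTop_le_cocompact
  have hratio := (tendsto_norm_Gamma_add_div_Gamma_vertical hσ (v := γ) (by simpa using hγ)).comp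
    hhalf
  simp_rw [ThetaR_eq_mul_norm_Gamma_ratio_sq]
  exact ((tendsto_pow_atTop two_ne_zero).comp hratio).const_mul_atTop (by positivity)
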